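/- A code C ⊆ F_{q^m}^N with |C| ≥ 2 attains the sum-rank Singleton bound |C| = q^{m(N − d_SR(C) + 1)} if and only if C·diag(A_1,...,A_g) is an MDS code for every choice of invertible matrices A_i ∈ F_q^{r_i × r_i}. -/

import Mathlib

set_option maxHeartbeats 1600000

/-- Sum-rank weight of a block vector over `Fq`: sum over the blocks of the
`Fq`-rank of the block (i.e. the `Fq`-dimension of the span of its entries). -/
noncomputable def srWeight (Fq : Type*) [Field Fq] {F : Type*} [Field F] [Algebra Fq F]
    {g : ℕ} {r : Fin g → ℕ} (c : ∀ i : Fin g, Fin (r i) → F) : ℕ :=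
  ∑ i, Module.finrank Fq (Submodule.span Fq (Set.range (c i)))

/-- Minimum sum-rank distance of a (possibly nonlinear) code. -/
noncomputable def srMinDist (Fq : Type*) [Field Fq] {F : Type*} [Field F] [Algebra Fq F]
    {g : ℕ} {r : Fin g → ℕ} (C : Set (∀ i : Fin g, Fin (r i) → F)) : ℕ :=
  sInf {w | ∃ c ∈ C, ∃ d ∈ C, c ≠ d ∧ w = srWeight Fq (c - d)}

/-- Hamming weight of a block vector. -/
noncomputable def hamWeight {F : Type*} [Field F] [DecidableEq F]
    {g : ℕ} {r : Fin g → ℕ} (c : ∀ i : Fin g, Fin (r i) → F) : ℕ :=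
  ∑ i, (Finset.univ.filter fun j => c i j ≠ 0).card

/-- Minimum Hamming distance of a (possibly nonlinear) code. -/
noncomputable def hamMinDist {F : Type*} [Field F] [DecidableEq F]
    {g : ℕ} {r : Fin g → ℕ} (C : Set (∀ i : Fin g, Fin (r i) → F)) : ℕ :=
  sInf {w | ∃ c ∈ C, ∃ d ∈ C, c ≠ d ∧ w = hamWeight (c - d)}

/-- Blockwise multiplication of a block vector by a block-diagonal matrix
`diag(A_1, …, A_g)` with entries in the subfield `Fq`. -/
noncomputable def blockMul {Fq F : Type*} [Field Fq] [Field F] [Algebra Fq F]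
    {g : ℕ} {r n : Fin g → ℕ} (c : ∀ i : Fin g, Fin (r i) → F)
    (A : ∀ i : Fin g, Matrix (Fin (r i)) (Fin (n i)) Fq) :
    ∀ i : Fin g, Fin (n i) → F :=
  fun i j => ∑ t, c i t * algebraMap Fq F (A i t j)

section Aux

open Finset Module Submodule

lemma MSRD.card_filter_val_lt {n t : ℕ} (h : t ≤ n) :
    (Finset.univ.filter fun j : Fin n => (j : ℕ) < t).card = t := by
  rcases eq_or_lt_of_le h with rfl | h'
  · rw [Finset.filter_true_of_mem (fun j _ => j.2), Finset.card_univ, Fintype.card_fin]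
  · have : (Finset.univ.filter fun j : Fin n => (j : ℕ) < t) = Finset.Iio ⟨t, h'⟩ := by
      ext j; simp [Fin.lt_def]
    rw [this, Fin.card_Iio]

variable {Fq F : Type*} [Field Fq] [Field F] [Algebra Fq F] {g : ℕ} {r : Fin g → ℕ}

/-- For any vector `v` over `F`, there is an invertible matrix `A` over the subfield
such that `v·A` has exactly `rank(v)` nonzero entries. -/
lemma MSRD.exists_unit_block [DecidableEq F] [FiniteDimensional Fq F] (n : ℕ) (v : Fin n → F) :
    ∃ A : Matrix (Fin n) (Fin n) Fq, IsUnit A ∧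
      (Finset.univ.filter fun j => (∑ t, v t * algebraMap Fq F (A t j)) ≠ 0).card
        = finrank Fq (Submodule.span Fq (Set.range v)) := by
  classical
  set f : (Fin n → Fq) →ₗ[Fq] F := Fintype.linearCombination Fq v with hf
  have hfapply : ∀ x : Fin n → Fq, f x = ∑ t, v t * algebraMap Fq F (x t) := by
    intro x
    rw [hf, Fintype.linearCombination_apply]
    exact Finset.sum_congr rfl fun t _ => by rw [Algebra.smul_def, mul_comm]
  set t := finrank Fq (Submodule.span Fq (Set.range v)) with ht
  have hrange : LinearMap.range f = Submodule.span Fq (Set.range v) :=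
    Fintype.range_linearCombination ..
  have hrk : finrank Fq (LinearMap.range f) + finrank Fq (LinearMap.ker f) = n := by
    rw [LinearMap.finrank_range_add_finrank_ker]
    simp [finrank_fintype_fun_eq_card]
  have hkert : finrank Fq (LinearMap.ker f) = n - t := by
    rw [hrange] at hrk; omega
  have htn : t ≤ n := by rw [hrange] at hrk; omega
  obtain ⟨K', hcompl⟩ := Submodule.exists_isCompl (LinearMap.ker f)
  have hK' : finrank Fq K' = t := by
    have := Submodule.finrank_add_eq_of_isCompl hcompl
    rw [hkert, finrank_fintype_fun_eq_card, Fintype.card_fin] at this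
    omega
  let bK' : Basis (Fin t) Fq K' := finBasisOfFinrankEq Fq K' hK'
  let bK : Basis (Fin (n - t)) Fq (LinearMap.ker f) :=
    finBasisOfFinrankEq Fq (LinearMap.ker f) hkert
  let e : (Fin t ⊕ Fin (n - t)) ≃ Fin n :=
    finSumFinEquiv.trans (finCongr (by omega))
  let b : Basis (Fin n) Fq (Fin n → Fq) :=
    (((bK'.prod bK).map (Submodule.prodEquivOfIsCompl K' (LinearMap.ker f)
      hcompl.symm))).reindex e
  have hb : ∀ j : Fin n, b j =
      Sum.elim (fun k : Fin t => (bK' k : Fin n → Fq))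
        (fun k : Fin (n - t) => (bK k : Fin n → Fq)) (e.symm j) := by
    intro j
    rw [Basis.reindex_apply, Basis.map_apply]
    rcases e.symm j with k | k
    · simp [Basis.prod_apply, Submodule.coe_prodEquivOfIsCompl']
    · simp [Basis.prod_apply, Submodule.coe_prodEquivOfIsCompl']
  have hfb : ∀ j : Fin n, f (b j) ≠ 0 ↔ (j : ℕ) < t := by
    intro j
    constructor
    · intro hne
      by_contra hlt
      have hj : e.symm j = Sum.inr ⟨(j : ℕ) - t, by omega⟩ := by
        rw [Equiv.symm_apply_eq]
        apply Fin.ext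
        simp [e, finSumFinEquiv]
        omega
      rw [hb, hj] at hne
      exact hne (bK ⟨(j : ℕ) - t, by omega⟩).2
    · intro hlt hzero
      have hj : e.symm j = Sum.inl ⟨(j : ℕ), hlt⟩ := by
        rw [Equiv.symm_apply_eq]
        apply Fin.ext
        simp [e, finSumFinEquiv]
      rw [hb, hj] at hzero
      have hmem : (bK' ⟨(j : ℕ), hlt⟩ : Fin n → Fq) ∈ K' ⊓ LinearMap.ker f :=
        ⟨(bK' ⟨(j : ℕ), hlt⟩).2, hzero⟩
      rw [hcompl.symm.inf_eq_bot] at hmem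
      exact bK'.ne_zero ⟨(j : ℕ), hlt⟩ (Subtype.ext (by simpa using hmem))
  refine ⟨(Pi.basisFun Fq (Fin n)).toMatrix b, ?_, ?_⟩
  · have := (Pi.basisFun Fq (Fin n)).invertibleToMatrix b
    exact isUnit_of_invertible _
  · have hcol : ∀ j, (∑ s, v s * algebraMap Fq F ((Pi.basisFun Fq (Fin n)).toMatrix b s j))
        = f (b j) := by
      intro j
      rw [hfapply]
      exact Finset.sum_congr rfl fun s _ => by
        rw [Basis.toMatrix_apply]; simp
    calc (Finset.univ.filter fun j =>
          (∑ s, v s * algebraMap Fq F ((Pi.basisFun Fq (Fin n)).toMatrix b s j)) ≠ 0).card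
        = (Finset.univ.filter fun j : Fin n => (j : ℕ) < t).card := by
          refine Finset.card_bij (fun j _ => j) ?_ (fun a _ b _ h => h)
            (fun j hj => ⟨j, by simpa [hcol, hfb] using hj, rfl⟩)
          intro j hj
          simp only [Finset.mem_filter, Finset.mem_univ, true_and] at hj ⊢
          rw [hcol, hfb] at hj
          exact hj
      _ = t := MSRD.card_filter_val_lt htn

lemma MSRD.blockMul_sub (c d : ∀ i : Fin g, Fin (r i) → F)
    (A : ∀ i : Fin g, Matrix (Fin (r i)) (Fin (r i)) Fq) :
    blockMul (c - d) A = blockMul c A - blockMul d A := by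
  funext i j
  simp [blockMul, sub_mul, Finset.sum_sub_distrib]

lemma MSRD.blockMul_blockMul (c : ∀ i : Fin g, Fin (r i) → F)
    (A B : ∀ i : Fin g, Matrix (Fin (r i)) (Fin (r i)) Fq) :
    blockMul (blockMul c A) B = blockMul c (fun i => A i * B i) := by
  funext i j
  simp only [blockMul, Finset.sum_mul, Matrix.mul_apply, map_sum]
  rw [Finset.sum_comm]
  refine Finset.sum_congr rfl fun t _ => ?_
  rw [Finset.mul_sum]
  exact Finset.sum_congr rfl fun s _ => by rw [map_mul, mul_assoc]

lemma MSRD.blockMul_one (c : ∀ i : Fin g, Fin (r i) → F) :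
    blockMul c (fun i => (1 : Matrix (Fin (r i)) (Fin (r i)) Fq)) = c := by
  funext i j
  simp [blockMul, Matrix.one_apply, apply_ite (algebraMap Fq F)]

lemma MSRD.blockMul_leftInverse {A : ∀ i : Fin g, Matrix (Fin (r i)) (Fin (r i)) Fq}
    (hA : ∀ i, IsUnit (A i)) :
    Function.LeftInverse (fun c : ∀ i : Fin g, Fin (r i) → F => blockMul c fun i => (A i)⁻¹)
      (fun c => blockMul c A) := by
  intro c
  simp only [MSRD.blockMul_blockMul]
  rw [show (fun i => A i * (A i)⁻¹) = fun i => (1 : Matrix (Fin (r i)) (Fin (r i)) Fq) from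
    funext fun i => Matrix.mul_nonsing_inv _ ((Matrix.isUnit_iff_isUnit_det _).mp (hA i))]
  exact MSRD.blockMul_one c

lemma MSRD.blockMul_injective {A : ∀ i : Fin g, Matrix (Fin (r i)) (Fin (r i)) Fq}
    (hA : ∀ i, IsUnit (A i)) :
    Function.Injective (fun c : ∀ i : Fin g, Fin (r i) → F => blockMul c A) :=
  (MSRD.blockMul_leftInverse hA).injective

lemma MSRD.span_blockMul_le (c : ∀ i : Fin g, Fin (r i) → F)
    (A : ∀ i : Fin g, Matrix (Fin (r i)) (Fin (r i)) Fq) (i : Fin g) :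
    Submodule.span Fq (Set.range (blockMul c A i)) ≤ Submodule.span Fq (Set.range (c i)) := by
  rw [Submodule.span_le]
  rintro _ ⟨j, rfl⟩
  have : blockMul c A i j = ∑ t, A i t j • c i t :=
    Finset.sum_congr rfl fun t _ => by rw [Algebra.smul_def, mul_comm]
  rw [this]
  exact Submodule.sum_mem _ fun t _ =>
    Submodule.smul_mem _ _ (Submodule.subset_span ⟨t, rfl⟩)

lemma MSRD.srWeight_blockMul_le [FiniteDimensional Fq F] (c : ∀ i : Fin g, Fin (r i) → F)
    (A : ∀ i : Fin g, Matrix (Fin (r i)) (Fin (r i)) Fq) :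
    srWeight Fq (blockMul c A) ≤ srWeight Fq c :=
  Finset.sum_le_sum fun i _ => Submodule.finrank_mono (MSRD.span_blockMul_le c A i)

lemma MSRD.srWeight_blockMul [FiniteDimensional Fq F] (c : ∀ i : Fin g, Fin (r i) → F)
    {A : ∀ i : Fin g, Matrix (Fin (r i)) (Fin (r i)) Fq} (hA : ∀ i, IsUnit (A i)) :
    srWeight Fq (blockMul c A) = srWeight Fq c := by
  refine le_antisymm (MSRD.srWeight_blockMul_le c A) ?_
  conv_lhs => rw [← MSRD.blockMul_leftInverse hA c]
  exact MSRD.srWeight_blockMul_le _ _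

lemma MSRD.srWeight_le_hamWeight [DecidableEq F] [FiniteDimensional Fq F]
    (c : ∀ i : Fin g, Fin (r i) → F) :
    srWeight Fq c ≤ hamWeight c := by
  classical
  refine Finset.sum_le_sum fun i _ => ?_
  set s : Finset F := (Finset.univ.filter fun j => c i j ≠ 0).image (c i) with hs
  have hsub : Set.range (c i) ⊆ insert (0 : F) ↑s := by
    rintro _ ⟨j, rfl⟩
    by_cases h : c i j = 0
    · simp [h]
    · exact Set.mem_insert_iff.mpr (Or.inr (by simp [hs]; exact ⟨j, h, rfl⟩))
  calc finrank Fq (Submodule.span Fq (Set.range (c i)))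
      ≤ finrank Fq (Submodule.span Fq (insert (0:F) ↑s)) :=
        Submodule.finrank_mono (Submodule.span_mono hsub)
    _ = finrank Fq (Submodule.span Fq (s : Set F)) := by rw [Submodule.span_insert_zero]
    _ ≤ s.card := finrank_span_finset_le_card (R := Fq) s
    _ ≤ _ := Finset.card_image_le

lemma MSRD.hamWeight_eq_zero_iff [DecidableEq F] (c : ∀ i : Fin g, Fin (r i) → F) :
    hamWeight c = 0 ↔ c = 0 := by
  constructor
  · intro h
    funext i j
    rw [hamWeight, Finset.sum_eq_zero_iff] at h
    have := h i (Finset.mem_univ i)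
    rw [Finset.card_eq_zero, Finset.filter_eq_empty_iff] at this
    simpa using this (Finset.mem_univ j)
  · rintro rfl; simp [hamWeight]

lemma MSRD.hamWeight_le [DecidableEq F] (c : ∀ i : Fin g, Fin (r i) → F) :
    hamWeight c ≤ ∑ i, r i :=
  Finset.sum_le_sum fun i _ => le_trans (Finset.card_filter_le _ _) (by simp)

lemma MSRD.hamWeight_eq_card_sigma [DecidableEq F] (c : ∀ i : Fin g, Fin (r i) → F) :
    hamWeight c =
      (Finset.univ.filter fun p : Σ i : Fin g, Fin (r i) => c p.1 p.2 ≠ 0).card := by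
  rw [hamWeight]
  have : (Finset.univ.filter fun p : Σ i : Fin g, Fin (r i) => c p.1 p.2 ≠ 0)
      = Finset.univ.sigma fun i => Finset.univ.filter fun j => c i j ≠ 0 := by
    ext p; simp
  rw [this, Finset.card_sigma]

lemma MSRD.hamMinDist_pos [DecidableEq F] (D : Set (∀ i : Fin g, Fin (r i) → F))
    (hD : D.Nontrivial) : 1 ≤ hamMinDist D := by
  obtain ⟨c, hc, d, hd, hne⟩ := hD
  rw [hamMinDist, Nat.one_le_iff_ne_zero]
  intro h0
  rcases Nat.sInf_eq_zero.mp h0 with h | h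
  · obtain ⟨c', _, d', _, hne', h0'⟩ := h
    exact hne' (sub_eq_zero.mp ((MSRD.hamWeight_eq_zero_iff _).mp h0'.symm))
  · exact absurd h (Set.nonempty_iff_ne_empty.mp ⟨_, c, hc, d, hd, hne, rfl⟩)

lemma MSRD.hamMinDist_le [DecidableEq F] (D : Set (∀ i : Fin g, Fin (r i) → F))
    (hD : D.Nontrivial) : hamMinDist D ≤ ∑ i, r i := by
  obtain ⟨c, hc, d, hd, hne⟩ := hD
  exact le_trans (Nat.sInf_le ⟨c, hc, d, hd, hne, rfl⟩) (MSRD.hamWeight_le _)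

/-- Hamming-metric Singleton bound for (possibly nonlinear) codes. -/
lemma MSRD.ham_singleton [DecidableEq F] [Fintype F] (D : Set (∀ i : Fin g, Fin (r i) → F))
    (hD : D.Nontrivial) :
    Nat.card D ≤ Fintype.card F ^ ((∑ i, r i) - hamMinDist D + 1) := by
  classical
  set N := ∑ i, r i with hN
  set dd := hamMinDist D with hd
  have h1 : 1 ≤ dd := MSRD.hamMinDist_pos D hD
  have h2 : dd ≤ N := MSRD.hamMinDist_le D hD
  have hcardJ : Fintype.card (Σ i : Fin g, Fin (r i)) = N := by
    simp [Fintype.card_sigma, hN]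
  obtain ⟨S, -, hS⟩ := Finset.exists_subset_card_eq
    (s := (Finset.univ : Finset (Σ i : Fin g, Fin (r i)))) (n := dd - 1)
    (by rw [Finset.card_univ, hcardJ]; omega)
  set ρ : (∀ i : Fin g, Fin (r i) → F) → ({p : Σ i : Fin g, Fin (r i) // p ∉ S} → F) :=
    fun c p => c p.1.1 p.1.2 with hρ
  have hinj : Set.InjOn ρ D := by
    intro c hc d' hd' heq
    by_contra hne
    have hsupp : (Finset.univ.filter
        fun p : Σ i : Fin g, Fin (r i) => (c - d') p.1 p.2 ≠ 0) ⊆ S := by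
      intro p hp
      simp only [Finset.mem_filter] at hp
      by_contra hpS
      exact hp.2 (by
        have := congrFun heq ⟨p, hpS⟩
        simpa [hρ, sub_eq_zero] using this)
    have hle : hamWeight (c - d') ≤ dd - 1 := by
      rw [MSRD.hamWeight_eq_card_sigma, ← hS]
      exact Finset.card_le_card hsupp
    have hge : dd ≤ hamWeight (c - d') := Nat.sInf_le ⟨c, hc, d', hd', hne, rfl⟩
    omega
  calc Nat.card D = (ρ '' D).ncard := by
        rw [Set.ncard_image_of_injOn hinj, Nat.card_coe_set_eq]
    _ ≤ (Set.univ : Set ({p : Σ i : Fin g, Fin (r i) // p ∉ S} → F)).ncard :=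
        Set.ncard_le_ncard (Set.subset_univ _) (Set.finite_univ)
    _ = Fintype.card F ^ (N - (dd - 1)) := by
        rw [Set.ncard_univ, Nat.card_eq_fintype_card, Fintype.card_fun]
        congr 1
        rw [Fintype.card_subtype]
        have : (Finset.univ.filter fun p : Σ i : Fin g, Fin (r i) => p ∉ S) = Sᶜ := by
          ext p; simp
        rw [this, Finset.card_compl, hcardJ, hS]
    _ = Fintype.card F ^ (N - dd + 1) := by congr 1; omega

end Aux

/-- a code attains the sum-rank Singleton bound (is MSRD) iff
`C·diag(A_1,…,A_g)` is MDS for every choice of invertible matrices `A_i` over `F_q`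
(where, for possibly nonlinear codes, MDS means `|D| = |F|^{N − d_H(D) + 1}`). -/
theorem msrd_iff_forall_blockMul_mds
    {Fq F : Type*} [Field Fq] [Fintype Fq] [Field F] [Fintype F] [Algebra Fq F]
    [DecidableEq F] {g : ℕ} {r : Fin g → ℕ}
    (C : Set (∀ i : Fin g, Fin (r i) → F)) (hC : C.Nontrivial) :
    Nat.card C =
        Fintype.card Fq ^ (Module.finrank Fq F * ((∑ i, r i) - srMinDist Fq C + 1)) ↔
      ∀ A : ∀ i : Fin g, Matrix (Fin (r i)) (Fin (r i)) Fq, (∀ i, IsUnit (A i)) →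
        Nat.card ((fun c => blockMul c A) '' C) =
          Fintype.card F ^
            ((∑ i, r i) - hamMinDist ((fun c => blockMul c A) '' C) + 1) := by
  classical
  set N := ∑ i, r i with hN
  set dSR := srMinDist Fq C with hdSR
  have hcardF : Fintype.card F = Fintype.card Fq ^ Module.finrank Fq F :=
    Module.card_eq_pow_finrank
  have hsrne : {w | ∃ c ∈ C, ∃ d ∈ C, c ≠ d ∧ w = srWeight Fq (c - d)}.Nonempty := by
    obtain ⟨c, hc, d, hd, hne⟩ := hC
    exact ⟨_, c, hc, d, hd, hne, rfl⟩
  -- minimal sum-rank distance is a lower bound on the Hamming distance of any transform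
  have hlow : ∀ (A : ∀ i : Fin g, Matrix (Fin (r i)) (Fin (r i)) Fq), (∀ i, IsUnit (A i)) →
      dSR ≤ hamMinDist ((fun c => blockMul c A) '' C) := by
    intro A hA
    have hne' : {w | ∃ c ∈ (fun c => blockMul c A) '' C, ∃ d ∈ (fun c => blockMul c A) '' C,
        c ≠ d ∧ w = hamWeight (c - d)}.Nonempty := by
      obtain ⟨c, hc, d, hd, hne⟩ := hC
      exact ⟨_, _, Set.mem_image_of_mem _ hc, _, Set.mem_image_of_mem _ hd,
        fun h => hne (MSRD.blockMul_injective hA h), rfl⟩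
    refine le_csInf hne' ?_
    rintro w ⟨_, ⟨c, hc, rfl⟩, _, ⟨d, hd, rfl⟩, hne2, rfl⟩
    have hcd : c ≠ d := fun h => hne2 (by rw [h])
    calc dSR ≤ srWeight Fq (c - d) := Nat.sInf_le ⟨c, hc, d, hd, hcd, rfl⟩
      _ = srWeight Fq (blockMul (c - d) A) := (MSRD.srWeight_blockMul _ hA).symm
      _ = srWeight Fq (blockMul c A - blockMul d A) := by rw [MSRD.blockMul_sub]
      _ ≤ hamWeight (blockMul c A - blockMul d A) := MSRD.srWeight_le_hamWeight _
  constructor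
  · -- MSRD → all transforms MDS
    intro hcard A hA
    set D := (fun c => blockMul c A) '' C with hD
    have hDnt : D.Nontrivial := hC.image (MSRD.blockMul_injective hA)
    have hDC : Nat.card D = Nat.card C :=
      Nat.card_image_of_injective (MSRD.blockMul_injective hA) C
    have hCval : Nat.card C = Fintype.card F ^ (N - dSR + 1) := by
      rw [hcard, hcardF, ← pow_mul]
    have hge : dSR ≤ hamMinDist D := hlow A hA
    have h1 : Nat.card D ≤ Fintype.card F ^ (N - hamMinDist D + 1) :=
      MSRD.ham_singleton D hDnt
    have h2 : Fintype.card F ^ (N - hamMinDist D + 1) ≤ Fintype.card F ^ (N - dSR + 1) :=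
      Nat.pow_le_pow_right Fintype.card_pos (by omega)
    refine le_antisymm h1 ?_
    rw [hDC, hCval]
    exact h2
  · -- all transforms MDS → MSRD
    intro hmds
    obtain ⟨c, hc, d, hd, hne, hw⟩ :
        dSR ∈ {w | ∃ c ∈ C, ∃ d ∈ C, c ≠ d ∧ w = srWeight Fq (c - d)} := Nat.sInf_mem hsrne
    have hAblock := fun i => MSRD.exists_unit_block (Fq := Fq) (r i) ((c - d) i)
    choose A hA1 hA2 using hAblock
    have hA : ∀ i, IsUnit (A i) := hA1
    set D := (fun c => blockMul c A) '' C with hD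
    have hwham : hamWeight (blockMul (c - d) A) = srWeight Fq (c - d) := by
      unfold hamWeight srWeight blockMul
      exact Finset.sum_congr rfl fun i _ => hA2 i
    have himgne : blockMul c A ≠ blockMul d A :=
      fun h => hne (MSRD.blockMul_injective hA h)
    have hle : hamMinDist D ≤ dSR := by
      refine le_trans (Nat.sInf_le ⟨blockMul c A, Set.mem_image_of_mem _ hc,
        blockMul d A, Set.mem_image_of_mem _ hd, himgne, rfl⟩) ?_
      rw [← MSRD.blockMul_sub, hwham]
      exact le_of_eq hw.symm
    have hdist : hamMinDist D = dSR := le_antisymm hle (hlow A hA)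
    have hcardD : Nat.card D = Fintype.card F ^ (N - hamMinDist D + 1) := hmds A hA
    have hDC : Nat.card D = Nat.card C :=
      Nat.card_image_of_injective (MSRD.blockMul_injective hA) C
    rw [← hDC, hcardD, hdist, hcardF, ← pow_mul]
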